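/- arXiv:2510.10146 — 2 statements merged into one kernel-verified Lean document; each statement's English description precedes it below -/
import Mathlib

section
/- Let (a_n)_{n≥1} satisfy 0 < α ≤ a_n ≤ M, and for each n let f_n : ℝ → ℝ be C¹ and convex with |f_n(t)| ≤ β_n(1+t²) for all t, where (β_n) ∈ s. For x ∈ s set g_n(x) := a_n x_n + f_n'(x_n). If x^{(j)} → x in s (i.e. ‖x^{(j)} − x‖_k → 0 for every k ∈ ℕ), then for every compact subset K of s (with the topology induced by the norms ‖·‖_k), sup_{h ∈ K} | Σ_{n=1}^∞ (g_n(x^{(j)}) − g_n(x)) h_n | → 0 as j → ∞. In other words, the derivative map x ↦ (g_n(x))_n is continuous from s into the dual of s with the topology of uniform convergence on compact sets. -/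
open Filter Topology

/-- The space `s` of rapidly decreasing sequences (indexed so that `x n` represents the
`(n+1)`-st term of the paper's sequence `(x_n)_{n ≥ 1}`). -/
def InS (x : ℕ → ℝ) : Prop :=
  ∀ k : ℕ, ∃ C : ℝ, ∀ n : ℕ, |x n| * ((n : ℝ) + 1) ^ k ≤ C

/-- `s` as a subspace of the space of all real sequences. -/
def Sspace : Submodule ℝ (ℕ → ℝ) where
  carrier := {x | InS x}
  add_mem' := by
    rintro x y hx hy k
    obtain ⟨Cx, hCx⟩ := hx k
    obtain ⟨Cy, hCy⟩ := hy k
    refine ⟨Cx + Cy, fun n => ?_⟩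
    have hpos : (0 : ℝ) ≤ ((n : ℝ) + 1) ^ k := by positivity
    have habs : |x n + y n| ≤ |x n| + |y n| := abs_add_le _ _
    calc |(x + y) n| * ((n : ℝ) + 1) ^ k
        = |x n + y n| * ((n : ℝ) + 1) ^ k := rfl
      _ ≤ (|x n| + |y n|) * ((n : ℝ) + 1) ^ k := by
          exact mul_le_mul_of_nonneg_right habs hpos
      _ = |x n| * ((n : ℝ) + 1) ^ k + |y n| * ((n : ℝ) + 1) ^ k := by ring
      _ ≤ Cx + Cy := add_le_add (hCx n) (hCy n)
  zero_mem' := by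
    intro k
    exact ⟨0, fun n => by simp⟩
  smul_mem' := by
    rintro c x hx k
    obtain ⟨C, hC⟩ := hx k
    refine ⟨|c| * C, fun n => ?_⟩
    calc |(c • x) n| * ((n : ℝ) + 1) ^ k
        = |c| * (|x n| * ((n : ℝ) + 1) ^ k) := by
          simp [abs_mul, mul_assoc]
      _ ≤ |c| * C := by
          exact mul_le_mul_of_nonneg_left (hC n) (abs_nonneg c)

/-- The map sending `x ∈ s` to the bounded sequence `(x_n n^k)_n`; the norms
`‖·‖_k` of `s` are realised as `‖·‖_∞` of these images. -/
noncomputable def toBdd (k : ℕ) (x : Sspace) : BoundedContinuousFunction ℕ ℝ :=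
  BoundedContinuousFunction.ofNormedAddCommGroupDiscrete
    (fun n => x.1 n * ((n : ℝ) + 1) ^ k) (Classical.choose (x.2 k))
    (fun n => by
      have h := Classical.choose_spec (x.2 k) n
      have hpos : (0 : ℝ) ≤ ((n : ℝ) + 1) ^ k := by positivity
      calc ‖x.1 n * ((n : ℝ) + 1) ^ k‖
          = |x.1 n| * ((n : ℝ) + 1) ^ k := by
            rw [Real.norm_eq_abs, abs_mul, abs_of_nonneg hpos]
        _ ≤ _ := h)

/-- The topology of `s`, generated by the increasing family of norms
`‖x‖_k = sup_n |x_n| n^k`, `k ∈ ℕ`. -/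
noncomputable def sTopology : TopologicalSpace Sspace :=
  ⨅ k : ℕ, TopologicalSpace.induced (toBdd k) inferInstance

/-!
Convexity squeezes `f'(t)` between the difference quotients `f t - f (t - 1)` and
`f (t + 1) - f t`, so the quadratic growth bound controls `|f_n'|` on bounded sets by a multiple
of `β_n`; since `β` and the `x⁽ʲ⁾` are bounded, the differences
`d_j(n) = g_n(x⁽ʲ⁾) - g_n(x)` are eventually bounded uniformly in `n`, and they tend to `0` for
each `n` because `f_n` is `C¹`. A compact `K ⊆ s` is bounded in `‖·‖₂`, so `|h_n| ≤ B / (n + 1)²`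
on `K`, and `sup_K |∑ d_j(n) h_n| ≤ ∑ |d_j(n)| B / (n + 1)² → 0` by dominated convergence.
-/

theorem ConvexOn.abs_deriv_le {f : ℝ → ℝ} (hf : ConvexOn ℝ Set.univ f) {t : ℝ}
    (hd : DifferentiableAt ℝ f t) : |deriv f t| ≤ |f (t - 1)| + |f t| + |f (t + 1)| := by
  have hright : deriv f t ≤ f (t + 1) - f t := by
    simpa [slope_def_field] using
      hf.deriv_le_slope (Set.mem_univ t) (Set.mem_univ (t + 1)) (by linarith) hd
  have hleft : f t - f (t - 1) ≤ deriv f t := by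
    simpa [slope_def_field] using
      hf.slope_le_deriv (Set.mem_univ (t - 1)) (Set.mem_univ t) (by linarith) hd
  rw [abs_le]
  constructor <;> linarith [le_abs_self (f (t - 1)), neg_abs_le (f t), le_abs_self (f t),
    le_abs_self (f (t + 1)), neg_abs_le (f (t - 1)), neg_abs_le (f (t + 1))]

theorem ConvexOn.abs_deriv_le_of_abs_le_mul_one_add_sq {f : ℝ → ℝ} (hf : ConvexOn ℝ Set.univ f)
    (hd : Differentiable ℝ f) {b R t : ℝ} (hg : ∀ s, |f s| ≤ b * (1 + s ^ 2)) (ht : |t| ≤ R) :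
    |deriv f t| ≤ 3 * b * (1 + (R + 1) ^ 2) := by
  have hb : 0 ≤ b := by simpa using (abs_nonneg (f 0)).trans (hg 0)
  have hnear : ∀ s, |s - t| ≤ 1 → |f s| ≤ b * (1 + (R + 1) ^ 2) := fun s hs => by
    have : s ^ 2 ≤ (R + 1) ^ 2 := sq_le_sq' (by linarith [(abs_le.1 hs).1, (abs_le.1 ht).1])
      (by linarith [(abs_le.1 hs).2, (abs_le.1 ht).2])
    exact (hg s).trans (by gcongr)
  calc |deriv f t| ≤ |f (t - 1)| + |f t| + |f (t + 1)| := hf.abs_deriv_le (hd t)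
    _ ≤ 3 * b * (1 + (R + 1) ^ 2) := by
      linarith [hnear (t - 1) (by norm_num), hnear t (by norm_num), hnear (t + 1) (by norm_num)]

theorem ConvexOn.abs_mul_add_deriv_sub_le {f : ℝ → ℝ} (hf : ConvexOn ℝ Set.univ f)
    (hd : Differentiable ℝ f) {a A b R y z : ℝ} (hg : ∀ s, |f s| ≤ b * (1 + s ^ 2))
    (ha : |a| ≤ A) (hz : |z| ≤ R) (hyz : |y - z| ≤ 1) :
    |(a * y + deriv f y) - (a * z + deriv f z)| ≤ A + 6 * b * (1 + (R + 2) ^ 2) := by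
  have hderiv : ∀ t, |t| ≤ R + 1 → |deriv f t| ≤ 3 * b * (1 + (R + 2) ^ 2) := fun t ht => by
    simpa [add_assoc, one_add_one_eq_two] using
      hf.abs_deriv_le_of_abs_le_mul_one_add_sq hd hg ht
  have hy : |y| ≤ R + 1 := by linarith [abs_sub_abs_le_abs_sub y z]
  have hlin : |a * (y - z)| ≤ A := by
    simpa [abs_mul] using mul_le_mul ha hyz (abs_nonneg _) ((abs_nonneg a).trans ha)
  calc |(a * y + deriv f y) - (a * z + deriv f z)|
      = |a * (y - z) + (deriv f y - deriv f z)| := by ring_nf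
    _ ≤ |a * (y - z)| + (|deriv f y| + |deriv f z|) :=
      (abs_add_le _ _).trans (add_le_add_right (abs_sub _ _) _)
    _ ≤ A + 6 * b * (1 + (R + 2) ^ 2) := by
      linarith [hderiv y hy, hderiv z (by linarith)]

theorem tendstoUniformlyOn_tsum_mul {α β ι : Type*} {𝓕 : Filter α} {d : α → β → ℝ}
    {w : β → ℝ} {v : ι → β → ℝ} {K : Set ι} {C : ℝ} (hw : Summable w)
    (hd : ∀ n, Tendsto (d · n) 𝓕 (𝓝 0)) (hC : ∀ᶠ j in 𝓕, ∀ n, |d j n| ≤ C)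
    (hv : ∀ i ∈ K, ∀ n, |v i n| ≤ w n) :
    TendstoUniformlyOn (fun j i => ∑' n, d j n * v i n) 0 𝓕 K := by
  have hdom : ∀ j, (∀ n, |d j n| ≤ C) → ∀ n, |d j n| * |w n| ≤ C * |w n| :=
    fun j hj n => mul_le_mul_of_nonneg_right (hj n) (abs_nonneg _)
  have hS : Tendsto (fun j => ∑' n, |d j n| * |w n|) 𝓕 (𝓝 0) := by
    have := tendsto_tsum_of_dominated_convergence (hw.abs.mul_left C)
      (fun n => by simpa using (hd n).abs.mul_const |w n|)
      (hC.mono fun j hj n => by simpa [abs_mul] using hdom j hj n)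
    rwa [tsum_zero] at this
  rw [Metric.tendstoUniformlyOn_iff]
  intro ε hε
  filter_upwards [hC, hS.eventually (gt_mem_nhds hε)] with j hj hSj i hi
  have hsum : Summable fun n => |d j n| * |w n| :=
    (hw.abs.mul_left C).of_nonneg_of_le (fun n => by positivity) (hdom j hj)
  calc dist ((0 : ι → ℝ) i) (∑' n, d j n * v i n) = ‖∑' n, d j n * v i n‖ := by
        simp [dist_zero_left]
    _ ≤ ∑' n, |d j n| * |w n| := tsum_of_norm_bounded hsum.hasSum fun n => by
        rw [norm_mul, Real.norm_eq_abs, Real.norm_eq_abs]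
        exact mul_le_mul_of_nonneg_left ((hv i hi n).trans (le_abs_self _)) (abs_nonneg _)
    _ < ε := hSj

theorem tendstoUniformly_atTop_of_abs_sub_le {β : Type*} {F : ℕ → β → ℝ} {f : β → ℝ}
    (h : ∀ ε > 0, ∃ J, ∀ j ≥ J, ∀ n, |F j n - f n| ≤ ε) : TendstoUniformly F f atTop := by
  refine Metric.tendstoUniformly_iff.2 fun ε hε => ?_
  obtain ⟨J, hJ⟩ := h (ε / 2) (half_pos hε)
  exact eventually_atTop.2 ⟨J, fun j hj n => by
    rw [dist_comm, Real.dist_eq]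
    exact (hJ j hj n).trans_lt (half_lt_self hε)⟩

theorem InS.exists_abs_le {x : ℕ → ℝ} (hx : InS x) : ∃ C, ∀ n, |x n| ≤ C := by
  simpa using hx 0

theorem exists_abs_mul_pow_le_of_isCompact {K : Set Sspace} (hK : @IsCompact _ sTopology K)
    (k : ℕ) : ∃ B, ∀ h ∈ K, ∀ n, |(h : ℕ → ℝ) n| * ((n : ℝ) + 1) ^ k ≤ B := by
  let := sTopology
  have hcont : Continuous (toBdd k) := continuous_iInf_dom continuous_induced_dom
  obtain ⟨B, hB⟩ := (hK.image hcont).isBounded.exists_norm_le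
  refine ⟨B, fun h hh n => ?_⟩
  calc |(h : ℕ → ℝ) n| * ((n : ℝ) + 1) ^ k = ‖toBdd k h n‖ := by
        simp [toBdd, abs_of_nonneg (by positivity : (0 : ℝ) ≤ (n : ℝ) + 1)]
    _ ≤ ‖toBdd k h‖ := BoundedContinuousFunction.norm_coe_le_norm _ n
    _ ≤ B := hB _ ⟨h, hh, rfl⟩

theorem summable_div_nat_add_one_sq (B : ℝ) : Summable fun n : ℕ => B / ((n : ℝ) + 1) ^ 2 := by
  have h := (summable_nat_add_iff 1).2 (Real.summable_one_div_nat_pow.2 one_lt_two)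
  simpa [div_eq_mul_inv] using h.mul_left B

theorem stmt_6_general (a β : ℕ → ℝ) (α M : ℝ) (f : ℕ → ℝ → ℝ)
    (ha : ∀ n, α ≤ a n ∧ a n ≤ M)
    (hC1 : ∀ n, ContDiff ℝ 1 (f n)) (hconv : ∀ n, ConvexOn ℝ Set.univ (f n))
    (hgrowth : ∀ n t, |f n t| ≤ β n * (1 + t ^ 2)) (hβ : InS β)
    (x : ℕ → ℝ) (hx : InS x) (xj : ℕ → ℕ → ℝ)
    (hconv_s : ∀ k : ℕ, ∀ ε > (0 : ℝ), ∃ J : ℕ, ∀ j ≥ J, ∀ n : ℕ,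
      |xj j n - x n| * ((n : ℝ) + 1) ^ k ≤ ε) :
    ∀ K : Set Sspace, @IsCompact _ sTopology K →
      ∀ ε > (0 : ℝ), ∃ J : ℕ, ∀ j ≥ J, ∀ h ∈ K,
        |∑' n : ℕ, ((a n * xj j n + deriv (f n) (xj j n)) -
            (a n * x n + deriv (f n) (x n))) * (h : ℕ → ℝ) n| ≤ ε := by
  intro K hK ε hε
  obtain ⟨B, hB⟩ := exists_abs_mul_pow_le_of_isCompact hK 2
  obtain ⟨Cx, hCx⟩ := hx.exists_abs_le
  obtain ⟨Cβ, hCβ⟩ := hβ.exists_abs_le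
  have hunif : TendstoUniformly xj x atTop :=
    tendstoUniformly_atTop_of_abs_sub_le fun ε hε => by simpa using hconv_s 0 ε hε
  have hgrowth_unif : ∀ n t, |f n t| ≤ Cβ * (1 + t ^ 2) := fun n t =>
    (hgrowth n t).trans <| by gcongr; exact (le_abs_self _).trans (hCβ n)
  have hd : ∀ n, Tendsto (fun j => (a n * xj j n + deriv (f n) (xj j n)) -
      (a n * x n + deriv (f n) (x n))) atTop (𝓝 0) := fun n => by
    have hg : Continuous fun t => a n * t + deriv (f n) t :=
      (continuous_const_mul (a n)).add ((hC1 n).continuous_deriv le_rfl)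
    simpa using ((hg.tendsto (x n)).comp (hunif.tendsto_at n)).sub_const
      (a n * x n + deriv (f n) (x n))
  have hbdd : ∀ᶠ j in atTop, ∀ n, |(a n * xj j n + deriv (f n) (xj j n)) -
      (a n * x n + deriv (f n) (x n))| ≤ max |α| |M| + 6 * Cβ * (1 + (Cx + 2) ^ 2) := by
    filter_upwards [Metric.tendstoUniformly_iff.1 hunif 1 one_pos] with j hj n
    exact (hconv n).abs_mul_add_deriv_sub_le ((hC1 n).differentiable one_ne_zero) (hgrowth_unif n)
      (abs_le_max_abs_abs (ha n).1 (ha n).2) (hCx n)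
      (by simpa [Real.dist_eq, abs_sub_comm] using (hj n).le)
  have hK2 : ∀ h ∈ K, ∀ n, |(h : ℕ → ℝ) n| ≤ B / ((n : ℝ) + 1) ^ 2 := fun h hh n =>
    (le_div_iff₀ (by positivity)).2 (hB h hh n)
  obtain ⟨J, hJ⟩ := eventually_atTop.1 <| Metric.tendstoUniformlyOn_iff.1
    (tendstoUniformlyOn_tsum_mul (summable_div_nat_add_one_sq B) hd hbdd hK2) ε hε
  exact ⟨J, fun j hj h hh => by simpa using (hJ j hj h hh).le⟩

/-- if `x⁽ʲ⁾ → x` in `s`, then for every compact `K ⊆ s`,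
`sup_{h ∈ K} |Σ (g_n(x⁽ʲ⁾) - g_n(x)) h_n| → 0`, where `g_n(x) = a_n x_n + f_n'(x_n)`:
the derivative map is continuous from `s` into its dual with the topology of uniform
convergence on compact sets. -/
theorem stmt_6 (a β : ℕ → ℝ) (α M : ℝ) (f : ℕ → ℝ → ℝ)
    (hα : 0 < α) (ha : ∀ n, α ≤ a n ∧ a n ≤ M)
    (hC1 : ∀ n, ContDiff ℝ 1 (f n)) (hconv : ∀ n, ConvexOn ℝ Set.univ (f n))
    (hgrowth : ∀ n t, |f n t| ≤ β n * (1 + t ^ 2)) (hβ : InS β)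
    (x : ℕ → ℝ) (hx : InS x) (xj : ℕ → ℕ → ℝ) (hxj : ∀ j, InS (xj j))
    (hconv_s : ∀ k : ℕ, ∀ ε > (0 : ℝ), ∃ J : ℕ, ∀ j ≥ J, ∀ n : ℕ,
      |xj j n - x n| * ((n : ℝ) + 1) ^ k ≤ ε) :
    ∀ K : Set Sspace, @IsCompact _ sTopology K →
      ∀ ε > (0 : ℝ), ∃ J : ℕ, ∀ j ≥ J, ∀ h ∈ K,
        |∑' n : ℕ, ((a n * xj j n + deriv (f n) (xj j n)) -
            (a n * x n + deriv (f n) (x n))) * (h : ℕ → ℝ) n| ≤ ε :=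
  stmt_6_general a β α M f ha hC1 hconv hgrowth hβ x hx xj hconv_s
end

section
/- Let (a_n)_{n≥1} satisfy 0 < α ≤ a_n ≤ M; for each n let f_n : ℝ → ℝ be C¹ and convex with |f_n(t)| ≤ β_n(1+t²), (β_n) ∈ s, and f_n(t) ≥ −γ_n with γ_n ≥ 0, Σ γ_n < ∞, and let F(x) = (1/2) Σ a_n x_n² + Σ f_n(x_n) on s. Then F admits a unique global minimum on s: there exists exactly one x₀ ∈ s such that F(x₀) ≤ F(x) for all x ∈ s. -/
/-- The `𝓕ₛ`-functional `F(x) = (1/2) Σ a_n x_n² + Σ f_n(x_n)`. -/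
noncomputable def Ffun (a : ℕ → ℝ) (f : ℕ → ℝ → ℝ) (x : ℕ → ℝ) : ℝ :=
  (1 / 2) * ∑' n : ℕ, a n * x n ^ 2 + ∑' n : ℕ, f n (x n)

open Set Filter

lemma deriv_eq_neg_mul_of_forall_quadratic_add_le {f : ℝ → ℝ} {a t₀ : ℝ}
    (hd : DifferentiableAt ℝ f t₀)
    (hmin : ∀ t, a * t₀ ^ 2 / 2 + f t₀ ≤ a * t ^ 2 / 2 + f t) : deriv f t₀ = -(a * t₀) := by
  have h := (((hasDerivAt_pow 2 t₀).const_mul a).div_const 2).add hd.hasDerivAt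
  have h₀ := IsLocalMin.hasDerivAt_eq_zero (Eventually.of_forall hmin) h
  norm_num at h₀
  linarith

namespace ConvexOn

variable {f : ℝ → ℝ}

lemma add_deriv_mul_sub_le (hf : ConvexOn ℝ univ f) {x : ℝ} (hd : DifferentiableAt ℝ f x)
    (y : ℝ) : f x + deriv f x * (y - x) ≤ f y := by
  rcases lt_trichotomy x y with hxy | rfl | hyx
  · have h := hf.deriv_le_slope (mem_univ x) (mem_univ y) hxy hd
    rw [slope_def_field, le_div_iff₀ (sub_pos.2 hxy)] at h
    linarith
  · simp
  · have h := hf.slope_le_deriv (mem_univ y) (mem_univ x) hyx hd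
    rw [slope_def_field, div_le_iff₀ (sub_pos.2 hyx)] at h
    linarith

lemma abs_deriv_zero_le_of_abs_le_mul_one_add_sq (hf : ConvexOn ℝ univ f)
    (hd : DifferentiableAt ℝ f 0) {b : ℝ} (hb : ∀ t, |f t| ≤ b * (1 + t ^ 2)) : |deriv f 0| ≤ 3 * b := by
  have h₁ := hf.add_deriv_mul_sub_le hd 1
  have hneg := hf.add_deriv_mul_sub_le hd (-1)
  have hb₁ := (abs_le.1 (hb 1)).2
  have hbneg := (abs_le.1 (hb (-1))).2
  have hb₀ := (abs_le.1 (hb 0)).1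
  norm_num at h₁ hneg hb₁ hbneg hb₀
  exact abs_le.2 ⟨by linarith, by linarith⟩

variable {a t₀ : ℝ}

lemma exists_forall_quadratic_add_le (ha : 0 < a) (hf : ConvexOn ℝ univ f)
    (hd : Differentiable ℝ f) : ∃ t₀, ∀ t, a * t₀ ^ 2 / 2 + f t₀ ≤ a * t ^ 2 / 2 + f t := by
  have hc : Continuous f := hd.continuous
  refine (by fun_prop : Continuous fun t => a * t ^ 2 / 2 + f t).exists_forall_le' 0 ?_
  filter_upwards [tendsto_norm_cocompact_atTop.eventually_ge_atTop (2 * |deriv f 0| / a)]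
    with t ht
  have h := hf.add_deriv_mul_sub_le (hd 0) t
  rw [Real.norm_eq_abs, div_le_iff₀ ha] at ht
  have := neg_abs_le (deriv f 0 * t)
  rw [abs_mul] at this
  nlinarith [abs_nonneg t, abs_mul_abs_self t]

lemma quadratic_growth_of_forall_quadratic_add_le (hf : ConvexOn ℝ univ f)
    (hd : DifferentiableAt ℝ f t₀)
    (hmin : ∀ t, a * t₀ ^ 2 / 2 + f t₀ ≤ a * t ^ 2 / 2 + f t) (t : ℝ) :
    a * t₀ ^ 2 / 2 + f t₀ + a / 2 * (t - t₀) ^ 2 ≤ a * t ^ 2 / 2 + f t := by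
  have h := hf.add_deriv_mul_sub_le hd t
  rw [deriv_eq_neg_mul_of_forall_quadratic_add_le hd hmin] at h
  nlinarith

lemma lt_of_forall_quadratic_add_le_of_ne (ha : 0 < a) (hf : ConvexOn ℝ univ f)
    (hd : DifferentiableAt ℝ f t₀) (hmin : ∀ t, a * t₀ ^ 2 / 2 + f t₀ ≤ a * t ^ 2 / 2 + f t)
    {t : ℝ} (ht : t ≠ t₀) : a * t₀ ^ 2 / 2 + f t₀ < a * t ^ 2 / 2 + f t := by
  have hpos : 0 < a / 2 * (t - t₀) ^ 2 := by
    have := sub_ne_zero.2 ht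
    positivity
  linarith [hf.quadratic_growth_of_forall_quadratic_add_le hd hmin t]

lemma mul_abs_le_abs_deriv_zero_of_forall_quadratic_add_le (hf : ConvexOn ℝ univ f)
    (hd : Differentiable ℝ f)
    (hmin : ∀ t, a * t₀ ^ 2 / 2 + f t₀ ≤ a * t ^ 2 / 2 + f t) : a * |t₀| ≤ |deriv f 0| := by
  have h₀ := hf.quadratic_growth_of_forall_quadratic_add_le (hd t₀) hmin 0
  have h := hf.add_deriv_mul_sub_le (hd 0) t₀
  have h' : a * |t₀| * |t₀| ≤ |deriv f 0| * |t₀| := by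
    have := le_abs_self (-(deriv f 0 * t₀))
    rw [abs_neg, abs_mul] at this
    rw [mul_assoc, abs_mul_abs_self]
    nlinarith
  rcases (abs_nonneg t₀).eq_or_lt with h0 | hpos
  · rw [← h0, mul_zero]; exact abs_nonneg _
  · exact le_of_mul_le_mul_right h' hpos

end ConvexOn

namespace InS

variable {x : ℕ → ℝ}

lemma exists_abs_le_s11 (hx : InS x) : ∃ C, ∀ n, |x n| ≤ C := by
  obtain ⟨C, hC⟩ := hx 0
  exact ⟨C, by simpa using hC⟩

lemma summable_abs (hx : InS x) : Summable fun n => |x n| := by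
  obtain ⟨C, hC⟩ := hx 2
  have hs : Summable fun n : ℕ => C * (1 / ((n : ℝ) + 1) ^ 2) :=
    ((summable_nat_add_iff 1).2 (Real.summable_one_div_nat_pow.2 one_lt_two)
      |>.congr fun n => by push_cast; rfl).mul_left C
  refine hs.of_nonneg_of_le (fun n => abs_nonneg _) fun n => ?_
  rw [mul_one_div, le_div_iff₀ (by positivity)]
  exact hC n

lemma summable_sq (hx : InS x) : Summable fun n => x n ^ 2 := by
  obtain ⟨C, hC⟩ := hx.exists_abs_le_s11
  refine (hx.summable_abs.mul_left C).of_nonneg_of_le (fun n => sq_nonneg _) fun n => ?_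
  rw [← sq_abs, sq]
  exact mul_le_mul_of_nonneg_right (hC n) (abs_nonneg _)

lemma of_abs_le_mul {y : ℕ → ℝ} {D : ℝ} (hx : InS x) (hD : 0 ≤ D)
    (h : ∀ n, |y n| ≤ D * |x n|) : InS y := by
  intro k
  obtain ⟨C, hC⟩ := hx k
  refine ⟨D * C, fun n => ?_⟩
  calc |y n| * ((n : ℝ) + 1) ^ k ≤ D * |x n| * ((n : ℝ) + 1) ^ k := by gcongr; exact h n
    _ = D * (|x n| * ((n : ℝ) + 1) ^ k) := mul_assoc _ _ _
    _ ≤ D * C := by gcongr; exact hC n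

end InS

lemma hasSum_Ffun {a β x : ℕ → ℝ} {M : ℝ} {f : ℕ → ℝ → ℝ} (ha : ∀ n, 0 ≤ a n ∧ a n ≤ M)
    (hgrowth : ∀ n t, |f n t| ≤ β n * (1 + t ^ 2)) (hβ : InS β) (hx : InS x) :
    HasSum (fun n => a n * x n ^ 2 / 2 + f n (x n)) (Ffun a f x) := by
  have hquad : Summable fun n => a n * x n ^ 2 :=
    (hx.summable_sq.mul_left M).of_nonneg_of_le (fun n => mul_nonneg (ha n).1 (sq_nonneg _))
      fun n => mul_le_mul_of_nonneg_right (ha n).2 (sq_nonneg _)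
  obtain ⟨C, hC⟩ := hx.exists_abs_le_s11
  have hf : Summable fun n => f n (x n) := by
    refine (hβ.summable_abs.mul_right (1 + C ^ 2)).of_norm_bounded fun n => ?_
    have hsq : x n ^ 2 ≤ C ^ 2 := sq_le_sq' (abs_le.1 (hC n)).1 (abs_le.1 (hC n)).2
    calc ‖f n (x n)‖ ≤ β n * (1 + x n ^ 2) := hgrowth n (x n)
      _ ≤ |β n| * (1 + C ^ 2) := by gcongr; exact le_abs_self _
  have h := (hquad.hasSum.mul_left (1 / 2)).add hf.hasSum
  rwa [show (fun n => 1 / 2 * (a n * x n ^ 2) + f n (x n)) =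
    fun n => a n * x n ^ 2 / 2 + f n (x n) from funext fun n => by ring] at h

theorem stmt_11_general (a β : ℕ → ℝ) (α M : ℝ) (f : ℕ → ℝ → ℝ)
    (hα : 0 < α) (ha : ∀ n, α ≤ a n ∧ a n ≤ M)
    (hC1 : ∀ n, ContDiff ℝ 1 (f n)) (hconv : ∀ n, ConvexOn ℝ Set.univ (f n))
    (hgrowth : ∀ n t, |f n t| ≤ β n * (1 + t ^ 2)) (hβ : InS β) :
    ∃! x₀ : {x : ℕ → ℝ // InS x}, ∀ x : {x : ℕ → ℝ // InS x},
      Ffun a f x₀.1 ≤ Ffun a f x.1 := by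
  have hd n : Differentiable ℝ (f n) := (hC1 n).differentiable one_ne_zero
  have ha₀ n : 0 < a n := hα.trans_le (ha n).1
  have hF {x : ℕ → ℝ} (hx : InS x) := hasSum_Ffun (fun n => ⟨(ha₀ n).le, (ha n).2⟩) hgrowth hβ hx
  choose t ht using fun n => (hconv n).exists_forall_quadratic_add_le (ha₀ n) (hd n)
  have hts : InS t := hβ.of_abs_le_mul (D := 3 / α) (by positivity) fun n => by
    rw [div_mul_eq_mul_div, le_div_iff₀ hα]
    calc |t n| * α ≤ a n * |t n| := by rw [mul_comm]; gcongr; exact (ha n).1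
      _ ≤ |deriv (f n) 0| :=
        (hconv n).mul_abs_le_abs_deriv_zero_of_forall_quadratic_add_le (hd n) (ht n)
      _ ≤ 3 * β n := (hconv n).abs_deriv_zero_le_of_abs_le_mul_one_add_sq (hd n 0) (hgrowth n)
      _ ≤ 3 * |β n| := by gcongr; exact le_abs_self _
  refine ⟨⟨t, hts⟩, fun x => hasSum_le (fun n => ht n (x.1 n)) (hF hts) (hF x.2), ?_⟩
  rintro ⟨y, hy⟩ hymin
  by_contra hne
  obtain ⟨n, hn⟩ : ∃ n, y n ≠ t n := by
    by_contra! h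
    exact hne (Subtype.ext (funext h))
  have hlt := (hconv n).lt_of_forall_quadratic_add_le_of_ne (ha₀ n) (hd n (t n)) (ht n) hn
  exact (hasSum_lt (fun n => ht n (y n)) hlt (hF hts) (hF hy)).not_ge (hymin ⟨t, hts⟩)

/-- an `𝓕ₛ`-functional admits a unique global minimum on `s`: there is
exactly one `x₀ ∈ s` with `F(x₀) ≤ F(x)` for all `x ∈ s`. -/
theorem stmt_11 (a β γ : ℕ → ℝ) (α M : ℝ) (f : ℕ → ℝ → ℝ)
    (hα : 0 < α) (ha : ∀ n, α ≤ a n ∧ a n ≤ M)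
    (hC1 : ∀ n, ContDiff ℝ 1 (f n)) (hconv : ∀ n, ConvexOn ℝ Set.univ (f n))
    (hgrowth : ∀ n t, |f n t| ≤ β n * (1 + t ^ 2)) (hβ : InS β)
    (hγ0 : ∀ n, 0 ≤ γ n) (hγ : Summable γ) (hlb : ∀ n t, -γ n ≤ f n t) :
    ∃! x₀ : {x : ℕ → ℝ // InS x}, ∀ x : {x : ℕ → ℝ // InS x},
      Ffun a f x₀.1 ≤ Ffun a f x.1 :=
  stmt_11_general a β α M f hα ha hC1 hconv hgrowth hβ
end
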